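/- arXiv:2303.16075 — 4 statements merged into one kernel-verified Lean document; each statement's English description precedes it below -/
import Mathlib

section
/- Let Q be a grid quiver of shape (ℓ₁,…,ℓ_d), and let α : Q₀ → ℝ satisfy α(s(e)) > α(t(e)) for every edge e. Then the full rectangle representation V = I[Λ(L)] is α-stable: every nonzero proper subrepresentation V' ⊊ V satisfies μ_α(V') < μ_α(V). -/
open scoped BigOperators

/-- A finite-dimensional representation of a quiver with vertex set `Q₀`,
edge set `Q₁`, source map `σ` and target map `τ`, over a field `K`. -/
structure QRep (Q₀ Q₁ : Type) (σ τ : Q₁ → Q₀) (K : Type) [Field K] where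
  V : Q₀ → Type
  [addgrp : ∀ x, AddCommGroup (V x)]
  [mod : ∀ x, Module K (V x)]
  [fd : ∀ x, FiniteDimensional K (V x)]
  f : ∀ e, V (σ e) →ₗ[K] V (τ e)

attribute [instance] QRep.addgrp QRep.mod QRep.fd

namespace QRep

variable {Q₀ Q₁ : Type} {σ τ : Q₁ → Q₀} {K : Type} [Field K]

/-- A family of subspaces forms a subrepresentation if it is invariant under the edge maps. -/
def IsSubrep (M : QRep Q₀ Q₁ σ τ K) (W : ∀ x, Submodule K (M.V x)) : Prop :=
  ∀ e, Submodule.map (M.f e) (W (σ e)) ≤ W (τ e)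

variable [Fintype Q₀]

/-- The slope of a dimension vector along a central charge `α`. -/
noncomputable def slopeVec (α : Q₀ → ℝ) (d : Q₀ → ℕ) : ℝ :=
  (∑ x, α x * (d x : ℝ)) / (∑ x, (d x : ℝ))

/-- The dimension vector of a representation. -/
noncomputable def dimVec (M : QRep Q₀ Q₁ σ τ K) (x : Q₀) : ℕ :=
  Module.finrank K (M.V x)

/-- The dimension vector of a family of subspaces. -/
noncomputable def dimVecOf (M : QRep Q₀ Q₁ σ τ K) (W : ∀ x, Submodule K (M.V x)) (x : Q₀) : ℕ :=
  Module.finrank K (W x)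

/-- The slope of a representation along a central charge `α`. -/
noncomputable def slope (α : Q₀ → ℝ) (M : QRep Q₀ Q₁ σ τ K) : ℝ :=
  slopeVec α (dimVec M)

def Nonzero (M : QRep Q₀ Q₁ σ τ K) : Prop := ∃ x, dimVec M x ≠ 0

/-- `α`-semistability: every nonzero subrepresentation has slope at most the slope of `M`. -/
def Semistable (α : Q₀ → ℝ) (M : QRep Q₀ Q₁ σ τ K) : Prop :=
  ∀ W, IsSubrep M W → (∃ x, W x ≠ ⊥) → slopeVec α (dimVecOf M W) ≤ slope α M

/-- `α`-stability: every nonzero proper subrepresentation has slope strictly less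
than the slope of `M`. -/
def Stable (α : Q₀ → ℝ) (M : QRep Q₀ Q₁ σ τ K) : Prop :=
  ∀ W, IsSubrep M W → (∃ x, W x ≠ ⊥) → (∃ x, W x ≠ ⊤) →
    slopeVec α (dimVecOf M W) < slope α M

/-- The subrepresentation determined by an invariant family of subspaces, as a representation. -/
noncomputable def subrep (M : QRep Q₀ Q₁ σ τ K) (W : ∀ x, Submodule K (M.V x))
    (h : IsSubrep M W) : QRep Q₀ Q₁ σ τ K where
  V x := W x
  f e := (M.f e).restrict (fun v hv => h e ⟨v, hv, rfl⟩)

/-- The quotient representation of `M` by an invariant family of subspaces. -/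
noncomputable def quotRep (M : QRep Q₀ Q₁ σ τ K) (W : ∀ x, Submodule K (M.V x))
    (h : IsSubrep M W) : QRep Q₀ Q₁ σ τ K where
  V x := M.V x ⧸ W x
  f e := Submodule.mapQ _ _ (M.f e) (Submodule.map_le_iff_le_comap.mp (h e))

/-- The direct sum of two representations. -/
noncomputable def prodRep (M N : QRep Q₀ Q₁ σ τ K) : QRep Q₀ Q₁ σ τ K where
  V x := M.V x × N.V x
  f e := (M.f e).prodMap (N.f e)

end QRep

namespace QRep

variable {K : Type} [Field K]

/-- The canonical map between two submodules of `K`: the inclusion when it exists,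
and zero otherwise. -/
noncomputable def homOfSub (P Q : Submodule K K) : P →ₗ[K] Q :=
  open scoped Classical in
  if h : P ≤ Q then Submodule.inclusion h else 0

/-- The indicator representation `I[S]` supported on `S`: the ground field at the
vertices of `S` with identity maps whenever possible, and `0` elsewhere. -/
noncomputable def indRep {Q₀ Q₁ : Type} (σ τ : Q₁ → Q₀) (S : Q₀ → Prop)
    [DecidablePred S] : QRep Q₀ Q₁ σ τ K where
  V x := ↥(if S x then (⊤ : Submodule K K) else ⊥)
  f _ := homOfSub _ _

end QRep

/-- Source map of the type `A_ℓ` quiver with orientation `o` (`true` = forward). -/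
def Asrc (ℓ : ℕ) (o : Fin ℓ → Bool) : Fin ℓ → Fin (ℓ+1) :=
  fun e => if o e then e.castSucc else e.succ

/-- Target map of the type `A_ℓ` quiver with orientation `o`. -/
def Atgt (ℓ : ℕ) (o : Fin ℓ → Bool) : Fin ℓ → Fin (ℓ+1) :=
  fun e => if o e then e.succ else e.castSucc

/-- The interval representation `I_τ[a,b]` of the type `A_ℓ` quiver with orientation `o`. -/
noncomputable def intervalRep (K : Type) [Field K] (ℓ : ℕ) (o : Fin ℓ → Bool) (a b : ℕ) :
    QRep (Fin (ℓ+1)) (Fin ℓ) (Asrc ℓ o) (Atgt ℓ o) K :=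
  QRep.indRep _ _ (fun x => a ≤ (x : ℕ) ∧ (x : ℕ) ≤ b)

/-! ### Grid quivers -/

/-- Vertices of the grid quiver of shape `L = (ℓ₁, …, ℓ_d)`: points of `∏ᵢ {0,…,ℓᵢ}`. -/
def GridV (d : ℕ) (L : Fin d → ℕ) : Type := ∀ i : Fin d, Fin (L i + 1)

instance (d : ℕ) (L : Fin d → ℕ) : Fintype (GridV d L) :=
  inferInstanceAs (Fintype (∀ i, Fin _))

/-- Edges of the grid quiver: a point together with a coordinate direction in which it
can be incremented. -/
def GridE (d : ℕ) (L : Fin d → ℕ) : Type :=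
  {pe : GridV d L × Fin d // (pe.1 pe.2 : ℕ) < L pe.2}

def gridSrc (d : ℕ) (L : Fin d → ℕ) : GridE d L → GridV d L := fun e => e.1.1

def gridTgt (d : ℕ) (L : Fin d → ℕ) : GridE d L → GridV d L := fun e =>
  Function.update e.1.1 e.1.2 ⟨e.1.1 e.1.2 + 1, Nat.succ_lt_succ e.2⟩

/-- The rectangle representation `I[R]` for the rectangle `R = ∏ᵢ [aᵢ, bᵢ]`. -/
noncomputable def rectRep (K : Type) [Field K] (d : ℕ) (L : Fin d → ℕ)
    (a b : Fin d → ℕ) : QRep (GridV d L) (GridE d L) (gridSrc d L) (gridTgt d L) K :=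
  QRep.indRep _ _ (fun p => ∀ i, a i ≤ (p i : ℕ) ∧ (p i : ℕ) ≤ b i)

/-! ### Auxiliary lemmas for the proof -/

section Aux

open Finset
open scoped FinsetFamily

lemma avg_core {γ : Type} [DistribLattice γ] [Fintype γ] [DecidableEq γ]
    (β : γ → ℝ) (U : Finset γ) (hup : ∀ ⦃a b : γ⦄, a ∈ U → a ≤ b → b ∈ U)
    (hUne : U.Nonempty) (hDne : Uᶜ.Nonempty)
    (hβ : ∀ ⦃a b : γ⦄, a ∈ Uᶜ → b ∈ U → a ≤ b → β b < β a) :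
    (∑ x ∈ U, β x) / U.card < (∑ x, β x) / Fintype.card γ := by
  classical
  set D := Uᶜ with hD
  -- Hall setup
  let ι := {x : γ // x ∈ D} × Fin U.card
  let κ := {y : γ // y ∈ U} × Fin D.card
  let t : ι → Finset κ := fun di => (univ.filter (fun u : {y : γ // y ∈ U} => di.1.1 ≤ u.1)) ×ˢ univ
  have hall : ∀ s : Finset ι, s.card ≤ (s.biUnion t).card := by
    intro s
    rcases s.eq_empty_or_nonempty with rfl | hs
    · simp
    set A : Finset γ := (s.image Prod.fst).image Subtype.val with hA
    have hAD : A ⊆ D := by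
      intro a ha
      simp only [hA, mem_image] at ha
      obtain ⟨⟨a', ha'⟩, _, rfl⟩ := ha
      exact ha'
    have hAcard : A.card = (s.image Prod.fst).card :=
      card_image_of_injective _ Subtype.val_injective
    set NU : Finset γ := U.filter (fun u => ∃ a ∈ A, a ≤ u) with hNU
    -- Daykin
    have hAU_sups : A ⊻ U ⊆ NU := by
      intro x hx
      rw [mem_sups] at hx
      obtain ⟨a, ha, u, hu, rfl⟩ := hx
      exact mem_filter.mpr ⟨hup hu le_sup_right, a, ha, le_sup_left⟩
    have hAU_infs : A ⊼ U ⊆ D := by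
      intro x hx
      rw [mem_infs] at hx
      obtain ⟨a, ha, u, hu, rfl⟩ := hx
      by_contra hx
      have h1 : a ⊓ u ∈ U := by simpa [hD] using hx
      exact (mem_compl.mp (hAD ha)) (hup h1 inf_le_left)
    have daykin : A.card * U.card ≤ D.card * NU.card := by
      calc A.card * U.card ≤ (A ⊼ U).card * (A ⊻ U).card :=
            Finset.le_card_infs_mul_card_sups A U
        _ ≤ D.card * NU.card :=
            Nat.mul_le_mul (card_le_card hAU_infs) (card_le_card hAU_sups)
    -- biUnion identification
    have hbi : s.biUnion t =
        (univ.filter (fun u : {y : γ // y ∈ U} => ∃ a ∈ A, a ≤ u.1)) ×ˢ (univ : Finset (Fin D.card)) := by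
      ext ⟨u, j⟩
      rw [mem_biUnion, mem_product, mem_filter]
      simp only [mem_univ, true_and, and_true]
      constructor
      · rintro ⟨⟨dd, i⟩, hmem, hle⟩
        have hle' := (mem_product.mp hle).1
        have hle'' := (mem_filter.mp hle').2
        refine ⟨dd.1, ?_, hle''⟩
        rw [hA, mem_image]
        exact ⟨dd, mem_image.mpr ⟨⟨dd, i⟩, hmem, rfl⟩, rfl⟩
      · rintro ⟨a, ha, hle⟩
        rw [hA, mem_image] at ha
        obtain ⟨a', ha', rfl⟩ := ha
        obtain ⟨x, hx, rfl⟩ := mem_image.mp ha'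
        refine ⟨x, hx, ?_⟩
        rw [mem_product, mem_filter]
        exact ⟨⟨mem_univ _, hle⟩, mem_univ _⟩
    have hfiltcard : (univ.filter (fun u : {y : γ // y ∈ U} => ∃ a ∈ A, a ≤ u.1)).card = NU.card := by
      rw [univ_eq_attach, filter_attach (fun y => ∃ a ∈ A, a ≤ y) U, card_map, card_attach, hNU]
    have hscard : s.card ≤ A.card * U.card := by
      have h1 : s ⊆ (s.image Prod.fst) ×ˢ (univ : Finset (Fin U.card)) := by
        intro x hx; exact mem_product.mpr ⟨mem_image_of_mem _ hx, mem_univ _⟩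
      calc s.card ≤ ((s.image Prod.fst) ×ˢ (univ : Finset (Fin U.card))).card := card_le_card h1
        _ = A.card * U.card := by rw [card_product, hAcard, card_univ, Fintype.card_fin]
    calc s.card ≤ A.card * U.card := hscard
      _ ≤ D.card * NU.card := daykin
      _ = (s.biUnion t).card := by
          rw [hbi, card_product, hfiltcard, card_univ, Fintype.card_fin, Nat.mul_comm]
  obtain ⟨f, hfinj, hft⟩ := (Finset.all_card_le_biUnion_card_iff_exists_injective t).mp hall
  have hUpos : 0 < U.card := card_pos.mpr hUne
  have hDpos : 0 < D.card := card_pos.mpr hDne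
  have hcards : Fintype.card ι = Fintype.card κ := by
    simp [ι, κ, Fintype.card_coe, Nat.mul_comm]
  have hfbij : Function.Bijective f :=
    (Fintype.bijective_iff_injective_and_card f).mpr ⟨hfinj, hcards⟩
  -- termwise strict inequality
  have hterm : ∀ x : ι, β (f x).1.1 < β x.1.1 := by
    intro x
    have h2 := (mem_product.mp (hft x)).1
    exact hβ x.1.2 (f x).1.2 (mem_filter.mp h2).2
  have hιne : Nonempty ι := by
    obtain ⟨dd, hd⟩ := hDne
    exact ⟨⟨⟨dd, hd⟩, ⟨0, hUpos⟩⟩⟩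
  have hsum : ∑ x : ι, β (f x).1.1 < ∑ x : ι, β x.1.1 :=
    Finset.sum_lt_sum_of_nonempty univ_nonempty (fun x _ => hterm x)
  have hL : ∑ x : ι, β (f x).1.1 = (D.card : ℝ) * ∑ u ∈ U, β u := by
    have h1 := Equiv.sum_comp (Equiv.ofBijective f hfbij) (fun y : κ => β y.1.1)
    simp only [Equiv.ofBijective_apply] at h1
    rw [h1, Fintype.sum_prod_type]
    simp only [Finset.sum_const, card_univ, Fintype.card_fin, nsmul_eq_mul]
    rw [← Finset.mul_sum, Finset.sum_coe_sort U β]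
  have hR : ∑ x : ι, β x.1.1 = (U.card : ℝ) * ∑ y ∈ D, β y := by
    rw [Fintype.sum_prod_type]
    simp only [Finset.sum_const, card_univ, Fintype.card_fin, nsmul_eq_mul]
    rw [← Finset.mul_sum, Finset.sum_coe_sort D β]
  rw [hL, hR] at hsum
  -- final algebra
  have hcompl : ∑ x ∈ U, β x + ∑ x ∈ D, β x = ∑ x, β x := Finset.sum_add_sum_compl U β
  have hcardcompl : U.card + D.card = Fintype.card γ := Finset.card_add_card_compl U
  have hNpos : 0 < (Fintype.card γ : ℝ) := by
    have : 0 < Fintype.card γ := by omega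
    exact_mod_cast this
  have hUposR : 0 < (U.card : ℝ) := by exact_mod_cast hUpos
  rw [div_lt_div_iff₀ hUposR hNpos]
  have : (Fintype.card γ : ℝ) = (U.card : ℝ) + (D.card : ℝ) := by exact_mod_cast hcardcompl.symm
  rw [this, ← hcompl]
  ring_nf
  nlinarith [hsum]


noncomputable instance (d : ℕ) (L : Fin d → ℕ) : DistribLattice (GridV d L) :=
  inferInstanceAs (DistribLattice (∀ i, Fin (L i + 1)))

instance (d : ℕ) (L : Fin d → ℕ) : DecidableEq (GridV d L) :=
  inferInstanceAs (DecidableEq (∀ i, Fin (L i + 1)))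

lemma gridLe_iff {d : ℕ} {L : Fin d → ℕ} (p q : GridV d L) :
    p ≤ q ↔ ∀ i, (p i : ℕ) ≤ (q i : ℕ) := Iff.rfl

/-- The edge-step relation on the grid. -/
def gridStep (d : ℕ) (L : Fin d → ℕ) (a b : GridV d L) : Prop :=
  ∃ e : GridE d L, gridSrc d L e = a ∧ gridTgt d L e = b

lemma grid_reaches {d : ℕ} {L : Fin d → ℕ} : ∀ (n : ℕ) (p q : GridV d L),
    (∑ i, ((q i : ℕ) - (p i : ℕ))) = n → p ≤ q →
    Relation.ReflTransGen (gridStep d L) p q := by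
  intro n
  induction n with
  | zero =>
    intro p q hsum hle
    have hpq : p = q := by
      funext i
      have h0 := Finset.sum_eq_zero_iff.mp hsum i (Finset.mem_univ i)
      exact Fin.ext (le_antisymm (hle i) (by omega))
    rw [hpq]
  | succ n ih =>
    intro p q hsum hle
    have hex : ∃ i, (p i : ℕ) < q i := by
      by_contra hc
      push_neg at hc
      have hz : ∀ i ∈ Finset.univ, (q i : ℕ) - (p i : ℕ) = 0 := fun i _ => by
        have := hc i; omega
      rw [Finset.sum_eq_zero hz] at hsum
      omega
    obtain ⟨i, hi⟩ := hex
    have hlt : (p i : ℕ) < L i := lt_of_lt_of_le hi (Nat.lt_succ_iff.mp (q i).isLt)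
    set p' : GridV d L := Function.update p i ⟨(p i : ℕ) + 1, Nat.succ_lt_succ hlt⟩ with hp'
    have hstep : gridStep d L p p' := ⟨⟨⟨p, i⟩, hlt⟩, rfl, rfl⟩
    have hval : ∀ j, (p' j : ℕ) = if j = i then (p i : ℕ) + 1 else (p j : ℕ) := by
      intro j
      by_cases hj : j = i
      · subst hj; rw [hp']; simp [Function.update]
      · rw [hp', if_neg hj]; simp [Function.update, hj]
    have hle' : p' ≤ q := by
      intro j
      rw [gridLe_iff] at hle
      by_cases hj : j = i
      · subst hj; show (p' j : ℕ) ≤ q j; rw [hval, if_pos rfl]; omega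
      · show (p' j : ℕ) ≤ q j; rw [hval, if_neg hj]; exact hle j
    have hsum' : (∑ j, ((q j : ℕ) - (p' j : ℕ))) = n := by
      have hfun : (fun j => (q j : ℕ) - (p' j : ℕ)) =
          Function.update (fun j => (q j : ℕ) - (p j : ℕ)) i ((q i : ℕ) - ((p i : ℕ) + 1)) := by
        funext j
        rw [Function.update_apply, hval]
        by_cases hj : j = i
        · subst hj; simp
        · simp [hj]
      rw [hfun, Finset.sum_update_of_mem (Finset.mem_univ i)]
      rw [← Finset.add_sum_erase Finset.univ _ (Finset.mem_univ i), Finset.erase_eq] at hsum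
      omega
    exact Relation.ReflTransGen.head hstep (ih p' q hsum' hle')

lemma grid_reflTransGen {d : ℕ} {L : Fin d → ℕ} {p q : GridV d L} (hle : p ≤ q) :
    Relation.ReflTransGen (gridStep d L) p q :=
  grid_reaches _ p q rfl hle

lemma alpha_le {d : ℕ} {L : Fin d → ℕ} {α : GridV d L → ℝ}
    (hα : ∀ e : GridE d L, α (gridSrc d L e) > α (gridTgt d L e))
    {p q : GridV d L} (h : Relation.ReflTransGen (gridStep d L) p q) : α q ≤ α p := by
  induction h with
  | refl => exact le_refl _
  | tail _ hstep ih =>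
    obtain ⟨e, rfl, rfl⟩ := hstep
    exact le_trans (le_of_lt (hα e)) ih

lemma alpha_lt {d : ℕ} {L : Fin d → ℕ} {α : GridV d L → ℝ}
    (hα : ∀ e : GridE d L, α (gridSrc d L e) > α (gridTgt d L e))
    {p q : GridV d L} (hle : p ≤ q) (hne : p ≠ q) : α q < α p := by
  rcases (Relation.ReflTransGen.cases_head (grid_reflTransGen hle)) with rfl | ⟨m, hstep, hrest⟩
  · exact absurd rfl hne
  · obtain ⟨e, rfl, rfl⟩ := hstep
    exact lt_of_le_of_lt (alpha_le hα hrest) (hα e)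

section RepHelpers

variable {K : Type} [Field K]

lemma sub_dichotomy {V : Type} [AddCommGroup V] [Module K V] [FiniteDimensional K V]
    (h1 : Module.finrank K V = 1) (W : Submodule K V) : W = ⊥ ∨ W = ⊤ := by
  by_cases hb : W = ⊥
  · exact Or.inl hb
  · right
    have hle : Module.finrank K W ≤ Module.finrank K V := Submodule.finrank_le W
    have hnz : Module.finrank K W ≠ 0 := fun h => hb (Submodule.finrank_eq_zero.mp h)
    exact Submodule.eq_top_of_finrank_eq (by omega)

lemma homOfSub_injective {P Q : Submodule K K} (hP : P = ⊤) (hQ : Q = ⊤) :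
    Function.Injective (QRep.homOfSub P Q) := by
  subst hP; subst hQ
  have h : QRep.homOfSub (⊤ : Submodule K K) ⊤ = Submodule.inclusion le_rfl := by
    simp only [QRep.homOfSub, dif_pos le_rfl]
  rw [h]
  exact Submodule.inclusion_injective _

lemma indRep_finrank {Q₀ Q₁ : Type} {σ τ : Q₁ → Q₀} (S : Q₀ → Prop) [DecidablePred S]
    {x : Q₀} (hx : S x) :
    Module.finrank K ((QRep.indRep σ τ S (K := K)).V x) = 1 := by
  show Module.finrank K ↥(if S x then (⊤ : Submodule K K) else ⊥) = 1
  rw [if_pos hx, finrank_top, Module.finrank_self]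

lemma indRep_f_injective {Q₀ Q₁ : Type} {σ τ : Q₁ → Q₀} (S : Q₀ → Prop) [DecidablePred S]
    (e : Q₁) (h1 : S (σ e)) (h2 : S (τ e)) :
    Function.Injective ((QRep.indRep σ τ S (K := K)).f e) := by
  show Function.Injective (QRep.homOfSub (K := K) _ _)
  exact homOfSub_injective (if_pos h1) (if_pos h2)

end RepHelpers

end Aux

/-- **Stability of the full rectangle.** Let `Q` be a grid quiver of shape
`L = (ℓ₁,…,ℓ_d)` and let `α` satisfy `α(s(e)) > α(t(e))` for every edge `e`. Then the
full rectangle representation `V = I[Λ(L)]` is `α`-stable: every nonzero proper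
subrepresentation has strictly smaller slope. -/
theorem full_rectangle_stable (K : Type) [Field K] (d : ℕ) (L : Fin d → ℕ)
    (α : GridV d L → ℝ) (hα : ∀ e : GridE d L, α (gridSrc d L e) > α (gridTgt d L e)) :
    QRep.Stable α (rectRep K d L (fun _ => 0) (fun i => L i)) := by
  classical
  set M := rectRep K d L (fun _ => 0) (fun i => L i) with hM
  intro W hW hWne hWpr
  have hScond : ∀ p : GridV d L, ∀ i, (fun _ : Fin d => 0) i ≤ (p i : ℕ) ∧ (p i : ℕ) ≤ L i :=
    fun p i => ⟨Nat.zero_le _, Nat.lt_succ_iff.mp (p i).isLt⟩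
  have hdim : ∀ p, Module.finrank K (M.V p) = 1 :=
    fun p => indRep_finrank _ (hScond p)
  have hbt : ∀ p, (⊥ : Submodule K (M.V p)) ≠ ⊤ := by
    intro p h
    have h0 : Module.finrank K (⊥ : Submodule K (M.V p)) = 0 := finrank_bot K (M.V p)
    rw [h, finrank_top, hdim p] at h0
    exact one_ne_zero h0
  have hdi : ∀ p, W p = ⊥ ∨ W p = ⊤ := fun p => sub_dichotomy (hdim p) (W p)
  set U : Finset (GridV d L) := Finset.univ.filter (fun p => W p = ⊤) with hU
  have hmemU : ∀ p, p ∈ U ↔ W p = ⊤ := fun p => by simp [hU]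
  have hedge : ∀ e : GridE d L, gridSrc d L e ∈ U → gridTgt d L e ∈ U := by
    intro e he
    rw [hmemU] at he
    rcases hdi (gridTgt d L e) with h | h
    · exfalso
      have hsne : W (gridSrc d L e) ≠ ⊥ := by
        rw [he]; exact fun hh => hbt _ hh.symm
      obtain ⟨v, hv, hv0⟩ := (Submodule.ne_bot_iff _).mp hsne
      have hmem : (M.f e) v ∈ W (gridTgt d L e) := hW e ⟨v, hv, rfl⟩
      have hinj : Function.Injective (M.f e) :=
        indRep_f_injective _ e (hScond _) (hScond _)
      have hne0 : (M.f e) v ≠ 0 := fun hh =>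
        hv0 (hinj (hh.trans (map_zero (M.f e)).symm))
      rw [h] at hmem
      exact hne0 ((Submodule.mem_bot K).mp hmem)
    · exact (hmemU _).mpr h
  have hup : ∀ ⦃a b : GridV d L⦄, a ∈ U → a ≤ b → b ∈ U := by
    intro a b ha hab
    have h := grid_reflTransGen hab
    clear hab
    induction h with
    | refl => exact ha
    | tail _ hstep ih =>
      obtain ⟨e, rfl, rfl⟩ := hstep
      exact hedge e ih
  have hUne : U.Nonempty := by
    obtain ⟨x, hx⟩ := hWne
    rcases hdi x with h | h
    · exact absurd h hx
    · exact ⟨x, (hmemU x).mpr h⟩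
  have hDne : Uᶜ.Nonempty := by
    obtain ⟨x, hx⟩ := hWpr
    refine ⟨x, Finset.mem_compl.mpr ?_⟩
    rw [hmemU]
    exact hx
  have hβ : ∀ ⦃a b : GridV d L⦄, a ∈ Uᶜ → b ∈ U → a ≤ b → α b < α a := by
    intro a b ha hb hab
    refine alpha_lt hα hab ?_
    rintro rfl
    exact (Finset.mem_compl.mp ha) hb
  have hkey := avg_core α U hup hUne hDne hβ
  -- identify the slopes
  have hdvW : ∀ p, ((QRep.dimVecOf M W p : ℕ) : ℝ) = if p ∈ U then 1 else 0 := by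
    intro p
    show ((Module.finrank K (W p) : ℕ) : ℝ) = _
    rcases hdi p with h | h
    · have hpU : p ∉ U := by
        rw [hmemU, h]
        exact fun ht => hbt p ht
      rw [h, finrank_bot, if_neg hpU]
      norm_num
    · rw [h, finrank_top, hdim p, if_pos ((hmemU p).mpr h)]
      norm_num
  have hslopeW : QRep.slopeVec α (QRep.dimVecOf M W) = (∑ x ∈ U, α x) / U.card := by
    unfold QRep.slopeVec
    simp only [hdvW, mul_ite, mul_one, mul_zero, Finset.sum_ite_mem, Finset.univ_inter,
      Finset.sum_const, nsmul_eq_mul]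
  have hslopeM : QRep.slope α M = (∑ x, α x) / (Fintype.card (GridV d L)) := by
    unfold QRep.slope QRep.slopeVec
    have hdv : ∀ x, ((QRep.dimVec M x : ℕ) : ℝ) = 1 := by
      intro x
      show ((Module.finrank K (M.V x) : ℕ) : ℝ) = 1
      rw [hdim x]
      norm_num
    simp only [hdv, mul_one, Finset.sum_const, nsmul_eq_mul, Finset.card_univ]
  rw [hslopeW, hslopeM]
  exact hkey
end

section
/- In the max-flow/min-cut network Φ built from an up-closed subset U ⊊ Q₀ of a finite distributive lattice Q₀ with complement D (source s* connected to each d ∈ D with capacity 1/|D|, each u ∈ U connected to sink t* with capacity 1/|U|, and infinite-capacity edges d → u whenever d ≤ u), every (s*,t*)-cut has capacity at least 1. -/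
open Finset
open scoped Classical ENNReal
open scoped FinsetFamily

/-- The capacity function of the max-flow/min-cut network built from an up-closed subset
`U` of a finite lattice `P` with complement `D = Uᶜ`: the source `Sum.inr false` is joined
to each `d ∈ D` with capacity `1/|D|`, each `u ∈ U` is joined to the sink `Sum.inr true`
with capacity `1/|U|`, and there is an infinite-capacity edge `d → u` whenever `d ≤ u`. -/
noncomputable def netCap {P : Type} [Lattice P] [Fintype P] (U : Finset P) :
    (P ⊕ Bool) × (P ⊕ Bool) → ℝ≥0∞
  | (Sum.inr false, Sum.inl d) => if d ∈ Uᶜ then ((Uᶜ.card : ℝ≥0∞))⁻¹ else 0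
  | (Sum.inl d, Sum.inl u) => if d ∈ Uᶜ ∧ u ∈ U ∧ d ≤ u then ⊤ else 0
  | (Sum.inl u, Sum.inr true) => if u ∈ U then ((U.card : ℝ≥0∞))⁻¹ else 0
  | _ => 0

/-- **Every cut has capacity at least 1.** In the network built from an up-closed subset
`U ⊊ P` of a finite distributive lattice `P` with nonempty complement `D = Uᶜ`, every
set of edges `E` whose removal disconnects the source from the sink (i.e. every
source-sink path `s* → d → u → t*`, with `d ∈ D`, `u ∈ U`, `d ≤ u`, uses an edge of `E`)
has total capacity at least `1`. -/
theorem cut_capacity_ge_one {P : Type} [DistribLattice P] [Fintype P]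
    (U : Finset P) (hup : ∀ x ∈ U, ∀ y, x ≤ y → y ∈ U)
    (hU : U.Nonempty) (hD : Uᶜ.Nonempty)
    (E : Finset ((P ⊕ Bool) × (P ⊕ Bool)))
    (hcut : ∀ d ∈ Uᶜ, ∀ u ∈ U, d ≤ u →
      (Sum.inr false, Sum.inl d) ∈ E ∨ (Sum.inl d, Sum.inl u) ∈ E ∨
      (Sum.inl u, Sum.inr true) ∈ E) :
    1 ≤ ∑ ε ∈ E, netCap U ε := by
  letI : DecidableEq P := Classical.decEq P
  set A : Finset P := Uᶜ.filter (fun d => (Sum.inr false, Sum.inl d) ∉ E) with hAdef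
  set B : Finset P := U.filter (fun u => (Sum.inl u, Sum.inr true) ∉ E) with hBdef
  by_cases hmid : ∃ a ∈ A, ∃ b ∈ B, a ≤ b
  · -- there is an infinite-capacity edge in `E`
    obtain ⟨a, ha, b, hb, hab⟩ := hmid
    rw [hAdef, mem_filter] at ha
    rw [hBdef, mem_filter] at hb
    have hE : (Sum.inl a, Sum.inl b) ∈ E := by
      rcases hcut a ha.1 b hb.1 hab with h | h | h
      · exact absurd h ha.2
      · exact h
      · exact absurd h hb.2
    have htop : netCap U ((Sum.inl a : P ⊕ Bool), (Sum.inl b : P ⊕ Bool)) = ⊤ := by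
      simp [netCap, ha.1, hb.1, hab]
    calc (1 : ℝ≥0∞) ≤ ⊤ := le_top
      _ = netCap U (Sum.inl a, Sum.inl b) := htop.symm
      _ ≤ ∑ ε ∈ E, netCap U ε := Finset.single_le_sum (fun _ _ => zero_le) hE
  · -- no infinite edge needed: count the source and sink edges in `E`
    push_neg at hmid
    have hAsub : A ⊆ Uᶜ := filter_subset _ _
    have hBsub : B ⊆ U := filter_subset _ _
    -- Daykin's inequality gives the key counting bound
    have hinfs : A ⊼ U ⊆ Uᶜ := by
      intro x hx
      obtain ⟨a, ha, u, hu, rfl⟩ := mem_infs.1 hx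
      have haD : a ∈ Uᶜ := hAsub ha
      rw [mem_compl] at haD ⊢
      intro hmem
      exact haD (hup _ hmem _ inf_le_left)
    have hsups : A ⊻ U ⊆ U \ B := by
      intro x hx
      obtain ⟨a, ha, u, hu, rfl⟩ := mem_sups.1 hx
      have hmem : a ⊔ u ∈ U := hup _ hu _ le_sup_right
      refine mem_sdiff.2 ⟨hmem, fun hcon => ?_⟩
      exact hmid a ha _ hcon le_sup_left
    have hkey : A.card * U.card ≤ Uᶜ.card * (U \ B).card := by
      calc A.card * U.card ≤ (A ⊼ U).card * (A ⊻ U).card :=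
            Finset.le_card_infs_mul_card_sups A U
        _ ≤ Uᶜ.card * (U \ B).card :=
            Nat.mul_le_mul (card_le_card hinfs) (card_le_card hsups)
    -- the natural number inequality
    have hcard : (Uᶜ \ A).card = Uᶜ.card - A.card := card_sdiff_of_subset hAsub
    have hnat : Uᶜ.card * U.card ≤ (Uᶜ \ A).card * U.card + (U \ B).card * Uᶜ.card := by
      rw [hcard]
      have h1 : (Uᶜ.card - A.card) * U.card + A.card * U.card = Uᶜ.card * U.card := by
        rw [← Nat.add_mul, Nat.sub_add_cancel (card_le_card hAsub)]
      calc Uᶜ.card * U.card = (Uᶜ.card - A.card) * U.card + A.card * U.card := h1.symm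
        _ ≤ (Uᶜ.card - A.card) * U.card + (U \ B).card * Uᶜ.card :=
            Nat.add_le_add_left (hkey.trans_eq (Nat.mul_comm _ _)) _
    -- the subset of edges of `E` we count
    set S1 : Finset ((P ⊕ Bool) × (P ⊕ Bool)) :=
      (Uᶜ \ A).image (fun d => ((Sum.inr false : P ⊕ Bool), (Sum.inl d : P ⊕ Bool))) with hS1
    set S2 : Finset ((P ⊕ Bool) × (P ⊕ Bool)) :=
      (U \ B).image (fun u => ((Sum.inl u : P ⊕ Bool), (Sum.inr true : P ⊕ Bool))) with hS2
    have hsubE : S1 ∪ S2 ⊆ E := by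
      intro ε hε
      rw [mem_union] at hε
      rcases hε with hε | hε
      · obtain ⟨d, hd, rfl⟩ := mem_image.1 hε
        rw [mem_sdiff] at hd
        by_contra h
        exact hd.2 (mem_filter.2 ⟨hd.1, h⟩)
      · obtain ⟨u, hu, rfl⟩ := mem_image.1 hε
        rw [mem_sdiff] at hu
        by_contra h
        exact hu.2 (mem_filter.2 ⟨hu.1, h⟩)
    have hdisj : Disjoint S1 S2 := by
      rw [Finset.disjoint_left]
      rintro ε h1 h2
      obtain ⟨d, -, rfl⟩ := mem_image.1 h1
      obtain ⟨u, -, h⟩ := mem_image.1 h2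
      simp at h
    have hsum1 : ∑ ε ∈ S1, netCap U ε = ((Uᶜ \ A).card : ℝ≥0∞) * ((Uᶜ.card : ℝ≥0∞))⁻¹ := by
      rw [hS1, Finset.sum_image (fun x _ y _ h => by simpa using h)]
      rw [Finset.sum_congr rfl (fun d hd => ?_), Finset.sum_const, nsmul_eq_mul]
      have : d ∈ Uᶜ := (mem_sdiff.1 hd).1
      simp [netCap, this]
    have hsum2 : ∑ ε ∈ S2, netCap U ε = ((U \ B).card : ℝ≥0∞) * ((U.card : ℝ≥0∞))⁻¹ := by
      rw [hS2, Finset.sum_image (fun x _ y _ h => by simpa using h)]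
      rw [Finset.sum_congr rfl (fun u hu => ?_), Finset.sum_const, nsmul_eq_mul]
      have : u ∈ U := (mem_sdiff.1 hu).1
      simp [netCap, this]
    have hDne : ((Uᶜ.card : ℝ≥0∞)) ≠ 0 := by
      simpa using hD.card_pos.ne'
    have hUne : ((U.card : ℝ≥0∞)) ≠ 0 := by
      simpa using hU.card_pos.ne'
    have hDnt : ((Uᶜ.card : ℝ≥0∞)) ≠ ⊤ := ENNReal.natCast_ne_top _
    have hUnt : ((U.card : ℝ≥0∞)) ≠ ⊤ := ENNReal.natCast_ne_top _
    have hfinal : (1 : ℝ≥0∞) ≤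
        ((Uᶜ \ A).card : ℝ≥0∞) * ((Uᶜ.card : ℝ≥0∞))⁻¹
          + ((U \ B).card : ℝ≥0∞) * ((U.card : ℝ≥0∞))⁻¹ := by
      rw [← div_eq_mul_inv, ← div_eq_mul_inv]
      have e1 : ((Uᶜ \ A).card : ℝ≥0∞) / (Uᶜ.card : ℝ≥0∞)
          = (((Uᶜ \ A).card : ℝ≥0∞) * (U.card : ℝ≥0∞)) / ((Uᶜ.card : ℝ≥0∞) * (U.card : ℝ≥0∞)) :=
        (ENNReal.mul_div_mul_right _ _ hUne hUnt).symm
      have e2 : ((U \ B).card : ℝ≥0∞) / (U.card : ℝ≥0∞)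
          = (((U \ B).card : ℝ≥0∞) * (Uᶜ.card : ℝ≥0∞)) / ((Uᶜ.card : ℝ≥0∞) * (U.card : ℝ≥0∞)) := by
        rw [mul_comm ((Uᶜ.card : ℝ≥0∞))]
        exact (ENNReal.mul_div_mul_right _ _ hDne hDnt).symm
      rw [e1, e2, ENNReal.div_add_div_same]
      rw [ENNReal.le_div_iff_mul_le (Or.inl (mul_ne_zero hDne hUne))
        (Or.inl (ENNReal.mul_ne_top hDnt hUnt)), one_mul]
      exact_mod_cast hnat
    calc (1 : ℝ≥0∞) ≤ _ := hfinal
      _ = ∑ ε ∈ S1 ∪ S2, netCap U ε := by rw [Finset.sum_union hdisj, hsum1, hsum2]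
      _ ≤ ∑ ε ∈ E, netCap U ε := Finset.sum_le_sum_of_subset hsubE
end

section
/- Let Q be the ladder quiver of length ℓ and let I = R^{a,b}_{c,d} with c ≤ a ≤ d ≤ b be a nestfree indecomposable. Given irrational t with (a−c)/(k−(a−c)) < t < (a−c+1)/(k−(a−c+1)), where k = (b−a)+(d−c)+2 is the total dimension of I, define α = δ_{x_a⁺} + t·δ_{x_c⁻}. Then I is α-semistable with slope (1+t)/k, and μ_α(I') < (1+t)/k for every proper nonzero subrepresentation I' ⊊ I. -/
open scoped BigOperators

/-! ### Ladder quivers -/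

/-- Vertices of the ladder quiver of length `ℓ`: `(i, true)` is the top vertex `xᵢ⁺`
and `(i, false)` is the bottom vertex `xᵢ⁻`. -/
def LadV (ℓ : ℕ) : Type := Fin (ℓ+1) × Bool

instance (ℓ : ℕ) : Fintype (LadV ℓ) := inferInstanceAs (Fintype (Fin (ℓ+1) × Bool))
instance (ℓ : ℕ) : DecidableEq (LadV ℓ) := inferInstanceAs (DecidableEq (Fin (ℓ+1) × Bool))

/-- Edges of the ladder quiver: horizontal edges `inl (i, s)` in row `s`, and vertical
edges `inr i` from `xᵢ⁺` down to `xᵢ⁻`. -/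
def LadE (ℓ : ℕ) : Type := (Fin ℓ × Bool) ⊕ Fin (ℓ+1)

def ladSrc (ℓ : ℕ) : LadE ℓ → LadV ℓ
  | Sum.inl (i, s) => (i.castSucc, s)
  | Sum.inr i => (i, true)

def ladTgt (ℓ : ℕ) : LadE ℓ → LadV ℓ
  | Sum.inl (i, s) => (i.succ, s)
  | Sum.inr i => (i, false)

/-- The nestfree indecomposable `R^{a,b}_{c,d}` of the ladder quiver: the field on the
top-row interval `[a,b]` and the bottom-row interval `[c,d]`, with identity maps
wherever possible. -/
noncomputable def ladderRep (K : Type) [Field K] (ℓ : ℕ) (a b c d : ℕ) :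
    QRep (LadV ℓ) (LadE ℓ) (ladSrc ℓ) (ladTgt ℓ) K :=
  QRep.indRep _ _ (fun v =>
    (v.2 = true ∧ a ≤ (v.1 : ℕ) ∧ (v.1 : ℕ) ≤ b) ∨
    (v.2 = false ∧ c ≤ (v.1 : ℕ) ∧ (v.1 : ℕ) ≤ d))


namespace LadderAux
open QRep Module

variable {K : Type} [Field K]

lemma finrank_ind (S : Prop) [Decidable S] :
    finrank K ↥(if S then (⊤ : Submodule K K) else ⊥) = if S then 1 else 0 := by
  by_cases h : S
  · rw [if_pos h, if_pos h]; simp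
  · rw [if_neg h, if_neg h]; simp

variable {Q₀ Q₁ : Type} {σ τ : Q₁ → Q₀} {S : Q₀ → Prop} [DecidablePred S]

lemma prop_edge (W : ∀ x, Submodule K ((QRep.indRep σ τ S (K := K)).V x))
    (hW : QRep.IsSubrep _ W) (e : Q₁) (hs : S (σ e)) (htg : S (τ e))
    (hne : W (σ e) ≠ ⊥) : W (τ e) ≠ ⊥ := by
  have hle : (if S (σ e) then (⊤ : Submodule K K) else ⊥) ≤
      (if S (τ e) then (⊤ : Submodule K K) else ⊥) := by
    rw [if_pos hs, if_pos htg]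
  have hf : (QRep.indRep σ τ S (K := K)).f e = QRep.homOfSub _ _ := rfl
  have hinj : Function.Injective ((QRep.indRep σ τ S (K := K)).f e) := by
    rw [hf, QRep.homOfSub, dif_pos hle]
    exact Submodule.inclusion_injective hle
  obtain ⟨x, hxW, hx0⟩ := (Submodule.ne_bot_iff _).mp hne
  refine (Submodule.ne_bot_iff _).mpr ⟨(QRep.indRep σ τ S (K := K)).f e x, hW e ⟨x, hxW, rfl⟩, ?_⟩
  intro h0
  exact hx0 (hinj (h0.trans (map_zero _).symm))

lemma sub_rank_le (M : QRep Q₀ Q₁ σ τ K) (W : ∀ x, Submodule K (M.V x)) (x : Q₀) :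
    QRep.dimVecOf M W x ≤ QRep.dimVec M x := Submodule.finrank_le (W x)

lemma sub_one_of_ne_bot (M : QRep Q₀ Q₁ σ τ K) (W : ∀ x, Submodule K (M.V x)) (x : Q₀)
    (h1 : QRep.dimVec M x = 1) (h : W x ≠ ⊥) : QRep.dimVecOf M W x = 1 := by
  have hle := sub_rank_le M W x
  have h0 : QRep.dimVecOf M W x ≠ 0 := fun h0 => h (Submodule.finrank_eq_zero.mp h0)
  omega

lemma zero_of_bot (M : QRep Q₀ Q₁ σ τ K) (W : ∀ x, Submodule K (M.V x)) (x : Q₀)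
    (h : W x = ⊥) : QRep.dimVecOf M W x = 0 := by
  rw [QRep.dimVecOf, h]; exact finrank_bot K (M.V x)

lemma top_of_rank (M : QRep Q₀ Q₁ σ τ K) (W : ∀ x, Submodule K (M.V x)) (x : Q₀)
    (h : QRep.dimVecOf M W x = QRep.dimVec M x) : W x = ⊤ :=
  Submodule.eq_top_of_finrank_eq h

end LadderAux

section LadderSpecific
open QRep Module LadderAux

variable (K : Type) [Field K]

lemma ladder_dim_one (ℓ a b c d : ℕ) (v : LadV ℓ)
    (h : (v.2 = true ∧ a ≤ (v.1 : ℕ) ∧ (v.1 : ℕ) ≤ b) ∨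
         (v.2 = false ∧ c ≤ (v.1 : ℕ) ∧ (v.1 : ℕ) ≤ d)) :
    QRep.dimVec (ladderRep K ℓ a b c d) v = 1 := by
  show finrank K ↥(if ((v.2 = true ∧ a ≤ (v.1 : ℕ) ∧ (v.1 : ℕ) ≤ b) ∨
         (v.2 = false ∧ c ≤ (v.1 : ℕ) ∧ (v.1 : ℕ) ≤ d)) then (⊤ : Submodule K K) else ⊥) = 1
  rw [if_pos h]; simp

lemma ladder_dim_zero (ℓ a b c d : ℕ) (v : LadV ℓ)
    (h : ¬ ((v.2 = true ∧ a ≤ (v.1 : ℕ) ∧ (v.1 : ℕ) ≤ b) ∨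
         (v.2 = false ∧ c ≤ (v.1 : ℕ) ∧ (v.1 : ℕ) ≤ d))) :
    QRep.dimVec (ladderRep K ℓ a b c d) v = 0 := by
  show finrank K ↥(if ((v.2 = true ∧ a ≤ (v.1 : ℕ) ∧ (v.1 : ℕ) ≤ b) ∨
         (v.2 = false ∧ c ≤ (v.1 : ℕ) ∧ (v.1 : ℕ) ≤ d)) then (⊤ : Submodule K K) else ⊥) = 0
  rw [if_neg h]; simp

lemma ladder_edge (ℓ a b c d : ℕ)
    (W : ∀ x, Submodule K ((ladderRep K ℓ a b c d).V x))
    (hW : QRep.IsSubrep _ W) (e : LadE ℓ)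
    (hs : ((ladSrc ℓ e).2 = true ∧ a ≤ ((ladSrc ℓ e).1 : ℕ) ∧ ((ladSrc ℓ e).1 : ℕ) ≤ b) ∨
          ((ladSrc ℓ e).2 = false ∧ c ≤ ((ladSrc ℓ e).1 : ℕ) ∧ ((ladSrc ℓ e).1 : ℕ) ≤ d))
    (htg : ((ladTgt ℓ e).2 = true ∧ a ≤ ((ladTgt ℓ e).1 : ℕ) ∧ ((ladTgt ℓ e).1 : ℕ) ≤ b) ∨
          ((ladTgt ℓ e).2 = false ∧ c ≤ ((ladTgt ℓ e).1 : ℕ) ∧ ((ladTgt ℓ e).1 : ℕ) ≤ d))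
    (hne : W (ladSrc ℓ e) ≠ ⊥) : W (ladTgt ℓ e) ≠ ⊥ :=
  LadderAux.prop_edge W hW e hs htg hne

lemma count_Icc (ℓ p q : ℕ) (hpq : p ≤ q) (hq : q ≤ ℓ) :
    (∑ i : Fin (ℓ+1), if p ≤ (i : ℕ) ∧ (i : ℕ) ≤ q then 1 else 0) = q - p + 1 := by
  rw [Fin.sum_univ_eq_sum_range (fun j => if p ≤ j ∧ j ≤ q then (1:ℕ) else 0)]
  have h2 : (Finset.range (ℓ+1)).filter (fun j => p ≤ j ∧ j ≤ q) = Finset.Icc p q := by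
    ext j; simp [Nat.lt_succ_iff]; omega
  simp only [Finset.sum_boole, Nat.cast_id, h2, Nat.card_Icc]
  omega

lemma sum_ladv {M : Type} [AddCommMonoid M] (ℓ : ℕ) (g : LadV ℓ → M) :
    ∑ v : LadV ℓ, g v =
      (∑ i : Fin (ℓ+1), g (i, true)) + ∑ i : Fin (ℓ+1), g (i, false) := by
  rw [show (∑ v : LadV ℓ, g v) = ∑ v : Fin (ℓ+1) × Bool, g v from rfl,
    Fintype.sum_prod_type (fun v : Fin (ℓ+1) × Bool => g v)]
  simp [Fintype.sum_bool, Finset.sum_add_distrib]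

end LadderSpecific

/-- **Semistability of nestfree ladder indecomposables along two-vertex charges.**
Let `I = R^{a,b}_{c,d}` (with `c ≤ a ≤ d ≤ b ≤ ℓ`) be a nestfree indecomposable of the
ladder quiver, of total dimension `k = (b-a)+(d-c)+2`. Given an irrational `t` with
`(a-c)/(k-(a-c)) < t < (a-c+1)/(k-(a-c+1))`, set `α = δ_{x_a⁺} + t·δ_{x_c⁻}`. Then `I`
is `α`-semistable of slope `(1+t)/k`, and every proper nonzero subrepresentation of `I`
has `α`-slope strictly less than `(1+t)/k`. -/
theorem ladder_indecomposable_semistable (K : Type) [Field K] (ℓ a b c d k : ℕ)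
    (hca : c ≤ a) (had : a ≤ d) (hdb : d ≤ b) (hbl : b ≤ ℓ)
    (hk : k = (b - a) + (d - c) + 2)
    (t : ℝ) (ht : Irrational t)
    (ht1 : ((a : ℝ) - c) / ((k : ℝ) - ((a : ℝ) - c)) < t)
    (ht2 : t < ((a : ℝ) - c + 1) / ((k : ℝ) - ((a : ℝ) - c + 1)))
    (α : LadV ℓ → ℝ)
    (hα : α = fun v =>
      (if v = ((⟨a, by omega⟩ : Fin (ℓ+1)), true) then (1 : ℝ) else 0) +
      (if v = ((⟨c, by omega⟩ : Fin (ℓ+1)), false) then t else 0)) :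
    QRep.Semistable α (ladderRep K ℓ a b c d) ∧
    QRep.slope α (ladderRep K ℓ a b c d) = (1 + t) / k ∧
    (∀ W, QRep.IsSubrep (ladderRep K ℓ a b c d) W → (∃ x, W x ≠ ⊥) → (∃ x, W x ≠ ⊤) →
      QRep.slopeVec α (QRep.dimVecOf (ladderRep K ℓ a b c d) W) < (1 + t) / k) := by
  classical
  have hal : a < ℓ + 1 := by omega
  have hcl : c < ℓ + 1 := by omega
  set M := ladderRep K ℓ a b c d with hM
  have hk0 : 0 < k := by omega
  have hkpos : (0:ℝ) < k := by exact_mod_cast hk0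
  have hk2 : a - c + 2 ≤ k := by omega
  have hkR : ((a : ℝ) - c) + 2 ≤ (k : ℝ) := by
    have h := (Nat.cast_le (α := ℝ)).mpr hk2
    rw [Nat.cast_add, Nat.cast_sub hca] at h
    push_cast at h ⊢
    linarith
  have hacnn : (0:ℝ) ≤ (a:ℝ) - c := by
    have := (Nat.cast_le (α := ℝ)).mpr hca; linarith
  have hden1 : (0:ℝ) < (k:ℝ) - ((a:ℝ) - c) := by linarith
  have hden2 : (0:ℝ) < (k:ℝ) - ((a:ℝ) - c + 1) := by linarith
  have htpos : 0 < t := lt_of_le_of_lt (div_nonneg hacnn hden1.le) ht1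
  have ht1' : (a:ℝ) - c < t * ((k:ℝ) - ((a:ℝ) - c)) := (div_lt_iff₀ hden1).mp ht1
  have ht2' : t * ((k:ℝ) - ((a:ℝ) - c + 1)) < (a:ℝ) - c + 1 := (lt_div_iff₀ hden2).mp ht2
  -- the weighted sum against α picks out the two special vertices
  have hsum : ∀ g : LadV ℓ → ℝ,
      (∑ v, α v * g v) = g (⟨a, hal⟩, true) + t * g (⟨c, hcl⟩, false) := by
    intro g
    rw [hα]
    simp only [add_mul, Finset.sum_add_distrib, ite_mul, one_mul, zero_mul,
      Finset.sum_ite_eq', Finset.mem_univ, if_true]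
    exact congrArg₂ (· + ·)
      ((Finset.sum_eq_single_of_mem (((⟨a, hal⟩ : Fin (ℓ+1)), true) : LadV ℓ) (Finset.mem_univ _) (fun x _ hx => if_neg hx)).trans (if_pos rfl))
      ((Finset.sum_eq_single_of_mem (((⟨c, hcl⟩ : Fin (ℓ+1)), false) : LadV ℓ) (Finset.mem_univ _) (fun x _ hx => if_neg hx)).trans (if_pos rfl))
  -- the dimension vector of M
  have hdimA : QRep.dimVec M (⟨a, hal⟩, true) = 1 :=
    ladder_dim_one K ℓ a b c d _ (Or.inl ⟨rfl, le_refl a, had.trans hdb⟩)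
  have hdimC : QRep.dimVec M (⟨c, hcl⟩, false) = 1 :=
    ladder_dim_one K ℓ a b c d _ (Or.inr ⟨rfl, le_refl c, hca.trans had⟩)
  have hdimT : ∀ i : Fin (ℓ+1), QRep.dimVec M (i, true)
      = if a ≤ (i:ℕ) ∧ (i:ℕ) ≤ b then 1 else 0 := by
    intro i
    by_cases h : a ≤ (i:ℕ) ∧ (i:ℕ) ≤ b
    · rw [if_pos h]; exact ladder_dim_one K ℓ a b c d (i, true) (Or.inl ⟨rfl, h.1, h.2⟩)
    · rw [if_neg h]
      refine ladder_dim_zero K ℓ a b c d (i, true) ?_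
      rintro (⟨_, h1, h2⟩ | ⟨hcontra, _⟩)
      · exact h ⟨h1, h2⟩
      · simp at hcontra
  have hdimB : ∀ i : Fin (ℓ+1), QRep.dimVec M (i, false)
      = if c ≤ (i:ℕ) ∧ (i:ℕ) ≤ d then 1 else 0 := by
    intro i
    by_cases h : c ≤ (i:ℕ) ∧ (i:ℕ) ≤ d
    · rw [if_pos h]; exact ladder_dim_one K ℓ a b c d (i, false) (Or.inr ⟨rfl, h.1, h.2⟩)
    · rw [if_neg h]
      refine ladder_dim_zero K ℓ a b c d (i, false) ?_
      rintro (⟨hcontra, _⟩ | ⟨_, h1, h2⟩)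
      · simp at hcontra
      · exact h ⟨h1, h2⟩
  have hNtot : (∑ v, QRep.dimVec M v) = k := by
    rw [sum_ladv]
    have h1 : (∑ i : Fin (ℓ+1), QRep.dimVec M (i, true)) = b - a + 1 := by
      rw [Finset.sum_congr rfl (fun i _ => hdimT i)]
      exact count_Icc ℓ a b (had.trans hdb) hbl
    have h2 : (∑ i : Fin (ℓ+1), QRep.dimVec M (i, false)) = d - c + 1 := by
      rw [Finset.sum_congr rfl (fun i _ => hdimB i)]
      exact count_Icc ℓ c d (hca.trans had) (hdb.trans hbl)
    omega
  have hslope : QRep.slope α M = (1 + t) / k := by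
    unfold QRep.slope QRep.slopeVec
    rw [hsum (fun v => ((QRep.dimVec M v : ℕ) : ℝ))]
    rw [show (∑ x : LadV ℓ, ((QRep.dimVec M x : ℕ) : ℝ)) = ((k:ℕ):ℝ) by
      rw [← Nat.cast_sum, hNtot]]
    rw [hdimA, hdimC]
    norm_num
  -- the strict inequality for proper nonzero subrepresentations
  have key : ∀ W, QRep.IsSubrep M W → (∃ x, W x ≠ ⊥) → (∃ x, W x ≠ ⊤) →
      QRep.slopeVec α (QRep.dimVecOf M W) < (1 + t) / k := by
    intro W hW hne hproper
    -- propagation chains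
    have chainT : W (⟨a, hal⟩, true) ≠ ⊥ →
        ∀ j, a ≤ j → j ≤ b → ∀ (hj : j < ℓ+1), W (⟨j, hj⟩, true) ≠ ⊥ := by
      intro h0 j haj
      induction j, haj using Nat.le_induction with
      | base => intro _ hj; exact h0
      | succ n hn ih =>
        intro hnb hj
        have hnl : n < ℓ := by omega
        have hsrc := ih (by omega) (by omega)
        exact ladder_edge K ℓ a b c d W hW (Sum.inl (⟨n, hnl⟩, true))
          (Or.inl ⟨rfl, by show a ≤ n; omega, by show n ≤ b; omega⟩)
          (Or.inl ⟨rfl, by show a ≤ n+1; omega, by show n+1 ≤ b; omega⟩)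
          hsrc
    have chainB : W (⟨c, hcl⟩, false) ≠ ⊥ →
        ∀ j, c ≤ j → j ≤ d → ∀ (hj : j < ℓ+1), W (⟨j, hj⟩, false) ≠ ⊥ := by
      intro h0 j hcj
      induction j, hcj using Nat.le_induction with
      | base => intro _ hj; exact h0
      | succ n hn ih =>
        intro hnd hj
        have hnl : n < ℓ := by omega
        have hsrc := ih (by omega) (by omega)
        exact ladder_edge K ℓ a b c d W hW (Sum.inl (⟨n, hnl⟩, false))
          (Or.inr ⟨rfl, by show c ≤ n; omega, by show n ≤ d; omega⟩)
          (Or.inr ⟨rfl, by show c ≤ n+1; omega, by show n+1 ≤ d; omega⟩)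
          hsrc
    have vert : ∀ j, a ≤ j → j ≤ d → ∀ (hj : j < ℓ+1),
        W (⟨j, hj⟩, true) ≠ ⊥ → W (⟨j, hj⟩, false) ≠ ⊥ := by
      intro j h1 h2 hj hb
      exact ladder_edge K ℓ a b c d W hW (Sum.inr ⟨j, hj⟩)
        (Or.inl ⟨rfl, by show a ≤ j; omega, by show j ≤ b; omega⟩)
        (Or.inr ⟨rfl, by show c ≤ j; omega, by show j ≤ d; omega⟩)
        hb
    have hcastsum : (∑ x : LadV ℓ, ((QRep.dimVecOf M W x : ℕ) : ℝ)) = (((∑ x : LadV ℓ, QRep.dimVecOf M W x : ℕ)) : ℝ) :=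
      (Nat.cast_sum _ _).symm
    by_cases hA : W (⟨a, hal⟩, true) = ⊥
    · by_cases hC : W (⟨c, hcl⟩, false) = ⊥
      · -- numerator is zero
        unfold QRep.slopeVec
        rw [hsum (fun v => ((QRep.dimVecOf M W v : ℕ) : ℝ))]
        rw [LadderAux.zero_of_bot M W _ hA, LadderAux.zero_of_bot M W _ hC]
        simp only [Nat.cast_zero, mul_zero, add_zero, zero_div]
        exact div_pos (by linarith) hkpos
      · -- bottom charged vertex present, top one absent
        have h0 : QRep.dimVecOf M W (⟨a, hal⟩, true) = 0 := LadderAux.zero_of_bot M W _ hA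
        have h1 : QRep.dimVecOf M W (⟨c, hcl⟩, false) = 1 :=
          LadderAux.sub_one_of_ne_bot M W _ hdimC hC
        have hbnd : d - c + 1 ≤ ∑ v, QRep.dimVecOf M W v := by
          have hple : ∀ v ∈ Finset.univ, (if v.2 = false ∧ c ≤ (v.1:ℕ) ∧ (v.1:ℕ) ≤ d
              then 1 else 0) ≤ QRep.dimVecOf M W v := by
            rintro ⟨i, s⟩ -
            split_ifs with h
            · obtain ⟨hs, h2, h3⟩ := h
              simp only at hs
              subst hs
              have hnb := chainB hC i.val h2 h3 i.isLt
              have := LadderAux.sub_one_of_ne_bot M W (i, false)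
                (ladder_dim_one K ℓ a b c d (i, false) (Or.inr ⟨rfl, h2, h3⟩)) hnb
              omega
            · exact Nat.zero_le _
          have hsle := Finset.sum_le_sum hple
          have hLHS : (∑ v : LadV ℓ, if v.2 = false ∧ c ≤ (v.1:ℕ) ∧ (v.1:ℕ) ≤ d
              then 1 else 0) = d - c + 1 := by
            rw [sum_ladv]
            have e1 : ∀ i : Fin (ℓ+1),
                (if (i, true).2 = false ∧ c ≤ ((i, true).1:ℕ) ∧ ((i, true).1:ℕ) ≤ d
                  then (1:ℕ) else 0) = 0 := by
              intro i; rw [if_neg]; rintro ⟨h, -⟩; simp at h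
            have e2 : ∀ i : Fin (ℓ+1),
                (if (i, false).2 = false ∧ c ≤ ((i, false).1:ℕ) ∧ ((i, false).1:ℕ) ≤ d
                  then (1:ℕ) else 0) = if c ≤ (i:ℕ) ∧ (i:ℕ) ≤ d then 1 else 0 := by
              intro i; refine if_congr ?_ rfl rfl; simp
            rw [Finset.sum_congr rfl (fun i _ => e1 i),
              Finset.sum_congr rfl (fun i _ => e2 i),
              count_Icc ℓ c d (hca.trans had) (hdb.trans hbl)]
            simp
          omega
        have hn3 : ((a:ℝ) - c + 1) ≤ ((∑ x : LadV ℓ, QRep.dimVecOf M W x : ℕ) : ℝ) := by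
          have hnn : a - c + 1 ≤ ∑ x : LadV ℓ, QRep.dimVecOf M W x := by omega
          have h := (Nat.cast_le (α := ℝ)).mpr hnn
          rw [Nat.cast_add, Nat.cast_sub hca] at h
          push_cast at h ⊢
          linarith
        have hnpos : (0:ℝ) < ((∑ x : LadV ℓ, QRep.dimVecOf M W x : ℕ) : ℝ) :=
          lt_of_lt_of_le (by linarith) hn3
        unfold QRep.slopeVec
        rw [hsum (fun v => ((QRep.dimVecOf M W v : ℕ) : ℝ)), h0, h1, hcastsum]
        rw [div_lt_div_iff₀ hnpos hkpos]
        simp only [Nat.cast_one, Nat.cast_zero, mul_zero, add_zero, mul_one, zero_add]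
        generalize hgen : ((∑ x : LadV ℓ, QRep.dimVecOf M W x : ℕ) : ℝ) = n at hn3 hnpos ⊢
        nlinarith [ht2', hn3, htpos,
          mul_le_mul_of_nonneg_left hn3 (by linarith : (0:ℝ) ≤ 1 + t)]
    · by_cases hC : W (⟨c, hcl⟩, false) = ⊥
      · -- top charged vertex present, bottom one absent
        have h1 : QRep.dimVecOf M W (⟨a, hal⟩, true) = 1 :=
          LadderAux.sub_one_of_ne_bot M W _ hdimA hA
        have h0 : QRep.dimVecOf M W (⟨c, hcl⟩, false) = 0 := LadderAux.zero_of_bot M W _ hC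
        have hbnd : (b - a + 1) + (d - a + 1) ≤ ∑ v, QRep.dimVecOf M W v := by
          have hple : ∀ v ∈ Finset.univ,
              (if (v.2 = true ∧ a ≤ (v.1:ℕ) ∧ (v.1:ℕ) ≤ b) ∨
                  (v.2 = false ∧ a ≤ (v.1:ℕ) ∧ (v.1:ℕ) ≤ d)
                then 1 else 0) ≤ QRep.dimVecOf M W v := by
            rintro ⟨i, s⟩ -
            split_ifs with h
            · rcases h with ⟨hs, h2, h3⟩ | ⟨hs, h2, h3⟩
              · simp only at hs
                subst hs
                have hnb := chainT hA i.val h2 h3 i.isLt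
                have := LadderAux.sub_one_of_ne_bot M W (i, true)
                  (ladder_dim_one K ℓ a b c d (i, true) (Or.inl ⟨rfl, h2, h3⟩)) hnb
                omega
              · simp only at hs
                subst hs
                have h2' : a ≤ (i:ℕ) := h2
                have h3' : (i:ℕ) ≤ d := h3
                have hnt := chainT hA i.val h2' (by omega) i.isLt
                have hnb := vert i.val h2' h3' i.isLt hnt
                have := LadderAux.sub_one_of_ne_bot M W (i, false)
                  (ladder_dim_one K ℓ a b c d (i, false)
                    (Or.inr ⟨rfl, hca.trans h2, h3⟩)) hnb
                omega
            · exact Nat.zero_le _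
          have hsle := Finset.sum_le_sum hple
          have hLHS : (∑ v : LadV ℓ,
              if (v.2 = true ∧ a ≤ (v.1:ℕ) ∧ (v.1:ℕ) ≤ b) ∨
                  (v.2 = false ∧ a ≤ (v.1:ℕ) ∧ (v.1:ℕ) ≤ d)
                then 1 else 0) = (b - a + 1) + (d - a + 1) := by
            rw [sum_ladv]
            have e1 : ∀ i : Fin (ℓ+1),
                (if ((i, true).2 = true ∧ a ≤ ((i, true).1:ℕ) ∧ ((i, true).1:ℕ) ≤ b) ∨
                    ((i, true).2 = false ∧ a ≤ ((i, true).1:ℕ) ∧ ((i, true).1:ℕ) ≤ d)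
                  then (1:ℕ) else 0) = if a ≤ (i:ℕ) ∧ (i:ℕ) ≤ b then 1 else 0 := by
              intro i; refine if_congr ?_ rfl rfl; simp
            have e2 : ∀ i : Fin (ℓ+1),
                (if ((i, false).2 = true ∧ a ≤ ((i, false).1:ℕ) ∧ ((i, false).1:ℕ) ≤ b) ∨
                    ((i, false).2 = false ∧ a ≤ ((i, false).1:ℕ) ∧ ((i, false).1:ℕ) ≤ d)
                  then (1:ℕ) else 0) = if a ≤ (i:ℕ) ∧ (i:ℕ) ≤ d then 1 else 0 := by
              intro i; refine if_congr ?_ rfl rfl; simp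
            rw [Finset.sum_congr rfl (fun i _ => e1 i),
              Finset.sum_congr rfl (fun i _ => e2 i),
              count_Icc ℓ a b (had.trans hdb) hbl,
              count_Icc ℓ a d had (hdb.trans hbl)]
          omega
        have hn2 : ((k:ℝ) - ((a:ℝ) - c)) ≤ ((∑ x : LadV ℓ, QRep.dimVecOf M W x : ℕ) : ℝ) := by
          have hnn : k ≤ (∑ x : LadV ℓ, QRep.dimVecOf M W x) + (a - c) := by omega
          have h := (Nat.cast_le (α := ℝ)).mpr hnn
          rw [Nat.cast_add, Nat.cast_sub hca] at h
          push_cast at h ⊢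
          linarith
        have hnpos : (0:ℝ) < ((∑ x : LadV ℓ, QRep.dimVecOf M W x : ℕ) : ℝ) :=
          lt_of_lt_of_le hden1 hn2
        unfold QRep.slopeVec
        rw [hsum (fun v => ((QRep.dimVecOf M W v : ℕ) : ℝ)), h0, h1, hcastsum]
        rw [div_lt_div_iff₀ hnpos hkpos]
        simp only [Nat.cast_one, Nat.cast_zero, mul_zero, add_zero, mul_one, zero_add]
        generalize hgen : ((∑ x : LadV ℓ, QRep.dimVecOf M W x : ℕ) : ℝ) = n at hn2 hnpos ⊢
        nlinarith [ht1', hn2, htpos,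
          mul_le_mul_of_nonneg_left hn2 htpos.le]
      · -- both charged vertices present: W is everything, contradiction
        exfalso
        obtain ⟨x0, hx0⟩ := hproper
        apply hx0
        obtain ⟨i, s⟩ := x0
        by_cases hsupp : (s = true ∧ a ≤ (i:ℕ) ∧ (i:ℕ) ≤ b) ∨
            (s = false ∧ c ≤ (i:ℕ) ∧ (i:ℕ) ≤ d)
        · apply LadderAux.top_of_rank M W
          rw [ladder_dim_one K ℓ a b c d (i, s) hsupp]
          rcases hsupp with ⟨h1', h2, h3⟩ | ⟨h1', h2, h3⟩
          · subst h1'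
            exact LadderAux.sub_one_of_ne_bot M W (i, true)
              (ladder_dim_one K ℓ a b c d (i, true) (Or.inl ⟨rfl, h2, h3⟩))
              (chainT hA i.val h2 h3 i.isLt)
          · subst h1'
            exact LadderAux.sub_one_of_ne_bot M W (i, false)
              (ladder_dim_one K ℓ a b c d (i, false) (Or.inr ⟨rfl, h2, h3⟩))
              (chainB hC i.val h2 h3 i.isLt)
        · apply LadderAux.top_of_rank M W
          rw [ladder_dim_zero K ℓ a b c d (i, s) hsupp]
          have hle := LadderAux.sub_rank_le M W (i, s)
          rw [ladder_dim_zero K ℓ a b c d (i, s) hsupp] at hle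
          omega
  refine ⟨?_, hslope, key⟩
  intro W hW hne
  by_cases hp : ∃ x, W x ≠ ⊤
  · rw [hslope]
    exact le_of_lt (key W hW hne hp)
  · push_neg at hp
    have hdd : QRep.dimVecOf M W = QRep.dimVec M := by
      funext x
      rw [QRep.dimVecOf, hp x, QRep.dimVec]
      exact finrank_top K (M.V x)
    rw [QRep.slope, hdd]
end

section
/- For a fixed integer k > 0 and a fixed subset S of vertices of the ladder quiver Q of length ℓ, the dimension vectors of the nestfree indecomposables I with total dimension k and min(supp(I)) = S form a linearly independent set in the real vector space of functions Q₀ → ℝ. -/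
open scoped BigOperators

open scoped Classical

/-- The flow partial order on the vertices of the ladder quiver: `v ≤ w` iff there is a
directed path from `v` to `w` (rightward, and from the top row to the bottom row). -/
def flowLe {ℓ : ℕ} (v w : LadV ℓ) : Prop :=
  v.1 ≤ w.1 ∧ (v.2 = true ∨ w.2 = false)

/-- Parameters of a nestfree indecomposable of the ladder quiver of length `ℓ`: an
optional top interval `[a,b]` and an optional bottom interval `[c,d]`, not both absent,
subject to `c ≤ a ≤ d ≤ b` when both are present. This parametrises the
indecomposables `R^{a,b}_{c,d}`, `R^{a,b}` and `R_{c,d}`. -/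
structure NFParam (ℓ : ℕ) where
  top : Option (ℕ × ℕ)
  bot : Option (ℕ × ℕ)
  htop : ∀ p ∈ top, p.1 ≤ p.2 ∧ p.2 ≤ ℓ
  hbot : ∀ q ∈ bot, q.1 ≤ q.2 ∧ q.2 ≤ ℓ
  hboth : ∀ p ∈ top, ∀ q ∈ bot, q.1 ≤ p.1 ∧ p.1 ≤ q.2 ∧ q.2 ≤ p.2
  hne : top ≠ none ∨ bot ≠ none

/-- The support of the nestfree indecomposable with parameters `P`. -/
def NFParam.supp {ℓ : ℕ} (P : NFParam ℓ) (v : LadV ℓ) : Prop :=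
  (v.2 = true ∧ ∃ p ∈ P.top, p.1 ≤ (v.1 : ℕ) ∧ (v.1 : ℕ) ≤ p.2) ∨
  (v.2 = false ∧ ∃ q ∈ P.bot, q.1 ≤ (v.1 : ℕ) ∧ (v.1 : ℕ) ≤ q.2)

/-- The dimension vector of the nestfree indecomposable with parameters `P`, as a
real-valued function on vertices. -/
noncomputable def NFParam.dimvec {ℓ : ℕ} (P : NFParam ℓ) : LadV ℓ → ℝ :=
  fun v => if P.supp v then 1 else 0

/-- The total dimension of the nestfree indecomposable with parameters `P`. -/
noncomputable def NFParam.totalDim {ℓ : ℕ} (P : NFParam ℓ) : ℕ :=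
  (Finset.univ.filter fun v => P.supp v).card

/-- The set of minimal elements of the support, in the flow order. -/
def NFParam.minSupp {ℓ : ℕ} (P : NFParam ℓ) : Set (LadV ℓ) :=
  {v | P.supp v ∧ ∀ w, P.supp w → flowLe w v → w = v}


namespace NestfreeAux

open Finset

variable {ℓ : ℕ}

/-- The rank of a parameter: `b+1` if the top interval is `[a,b]`, else `0`. -/
def rank (P : NFParam ℓ) : ℕ :=
  match P.top with
  | none => 0
  | some p => p.2 + 1

lemma rank_none {P : NFParam ℓ} (h : P.top = none) : rank P = 0 := by
  unfold rank; rw [h]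

lemma rank_some {P : NFParam ℓ} {p : ℕ × ℕ} (h : P.top = some p) : rank P = p.2 + 1 := by
  unfold rank; rw [h]

lemma supp_top (P : NFParam ℓ) (j : Fin (ℓ+1)) :
    P.supp (j, true) ↔ ∃ p ∈ P.top, p.1 ≤ (j : ℕ) ∧ (j : ℕ) ≤ p.2 := by
  simp [NFParam.supp]

lemma supp_bot (P : NFParam ℓ) (j : Fin (ℓ+1)) :
    P.supp (j, false) ↔ ∃ q ∈ P.bot, q.1 ≤ (j : ℕ) ∧ (j : ℕ) ≤ q.2 := by
  simp [NFParam.supp]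

lemma card_interval (a b : ℕ) (hab : a ≤ b) (hb : b ≤ ℓ) :
    ((Finset.univ : Finset (Fin (ℓ+1))).filter fun j : Fin (ℓ+1) => a ≤ j.val ∧ j.val ≤ b).card
      = b + 1 - a := by
  rw [← Nat.card_Icc a b]
  apply Finset.card_nbij' (i := fun j : Fin (ℓ+1) => (j : ℕ))
    (j := fun n => (⟨min n ℓ, by omega⟩ : Fin (ℓ+1)))
  · intro x hx
    simp only [Finset.mem_coe, Finset.mem_filter, Finset.mem_univ, true_and] at hx
    simp only [Finset.mem_coe, Finset.mem_Icc]
    omega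
  · intro n hn
    simp only [Finset.mem_coe, Finset.mem_Icc] at hn
    simp only [Finset.mem_coe, Finset.mem_filter, Finset.mem_univ, true_and]
    constructor <;> simp <;> omega
  · intro x hx
    have : (x : ℕ) ≤ ℓ := by omega
    exact Fin.ext (by simp; omega)
  · intro n hn
    simp only [Finset.mem_coe, Finset.mem_Icc] at hn
    simp
    omega

lemma totalDim_split (P : NFParam ℓ) :
    P.totalDim = ((Finset.univ : Finset (Fin (ℓ+1))).filter fun j => P.supp (j, true)).card
      + ((Finset.univ : Finset (Fin (ℓ+1))).filter fun j => P.supp (j, false)).card := by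
  classical
  unfold NFParam.totalDim
  rw [Finset.card_filter, Finset.card_filter, Finset.card_filter]
  have hsplit : (∑ v : LadV ℓ, if P.supp v then (1 : ℕ) else 0)
      = ∑ j : Fin (ℓ+1), ∑ t : Bool, if P.supp (j, t) then 1 else 0 :=
    Finset.sum_product (s := (Finset.univ : Finset (Fin (ℓ+1))))
      (t := (Finset.univ : Finset Bool)) (f := fun v => if P.supp v then 1 else 0)
  rw [hsplit, ← Finset.sum_add_distrib]
  refine Finset.sum_congr rfl fun j _ => ?_
  rw [Fintype.sum_bool]

lemma card_top_some {P : NFParam ℓ} {a b : ℕ} (h : P.top = some (a, b)) :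
    ((Finset.univ : Finset (Fin (ℓ+1))).filter fun j => P.supp (j, true)).card = b + 1 - a := by
  have hab := P.htop (a, b) (by rw [h]; rfl)
  rw [show ((Finset.univ : Finset (Fin (ℓ+1))).filter fun j => P.supp (j, true))
      = ((Finset.univ : Finset (Fin (ℓ+1))).filter fun j : Fin (ℓ+1) => a ≤ j.val ∧ j.val ≤ b) from
    Finset.filter_congr fun j _ => by simp [supp_top, h]]
  exact card_interval a b hab.1 hab.2

lemma card_top_none {P : NFParam ℓ} (h : P.top = none) :
    ((Finset.univ : Finset (Fin (ℓ+1))).filter fun j => P.supp (j, true)).card = 0 := by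
  rw [Finset.card_eq_zero, Finset.filter_eq_empty_iff]
  intro j _
  simp [supp_top, h]

lemma card_bot_some {P : NFParam ℓ} {c d : ℕ} (h : P.bot = some (c, d)) :
    ((Finset.univ : Finset (Fin (ℓ+1))).filter fun j => P.supp (j, false)).card = d + 1 - c := by
  have hcd := P.hbot (c, d) (by rw [h]; rfl)
  rw [show ((Finset.univ : Finset (Fin (ℓ+1))).filter fun j => P.supp (j, false))
      = ((Finset.univ : Finset (Fin (ℓ+1))).filter fun j : Fin (ℓ+1) => c ≤ j.val ∧ j.val ≤ d) from
    Finset.filter_congr fun j _ => by simp [supp_bot, h]]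
  exact card_interval c d hcd.1 hcd.2

lemma card_bot_none {P : NFParam ℓ} (h : P.bot = none) :
    ((Finset.univ : Finset (Fin (ℓ+1))).filter fun j => P.supp (j, false)).card = 0 := by
  rw [Finset.card_eq_zero, Finset.filter_eq_empty_iff]
  intro j _
  simp [supp_bot, h]

/-- The top-left vertex is minimal in the support. -/
lemma top_mem_minSupp {P : NFParam ℓ} {a b : ℕ} (h : P.top = some (a, b)) :
    ((⟨a, by have := P.htop (a,b) (by rw [h]; rfl); omega⟩ : Fin (ℓ+1)), true) ∈ P.minSupp := by
  have hab := P.htop (a, b) (by rw [h]; rfl)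
  constructor
  · exact Or.inl ⟨rfl, ⟨(a, b), by rw [h]; rfl, le_refl a, hab.1⟩⟩
  · rintro ⟨i, s⟩ hw ⟨hle, hor⟩
    cases s with
    | false =>
      exfalso
      rcases hor with h1 | h1 <;> simp_all
    | true =>
      rcases hw with ⟨_, p, hp, hpi⟩ | ⟨hcontra, _⟩
      · rw [h] at hp
        have hpab : p = (a, b) := ((by simpa using hp : (a, b) = p)).symm
        subst hpab
        have hia : (i : ℕ) ≤ a := hle
        have hpi' : a ≤ (i : ℕ) := hpi.1
        exact congrArg (fun n => ((n, true) : LadV ℓ)) (Fin.ext (le_antisymm hia hpi'))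
      · simp at hcontra

/-- Characterisation of bottom-row minimal support elements when the top interval exists. -/
lemma bot_minSupp_iff {P : NFParam ℓ} {a b : ℕ} (h : P.top = some (a, b)) (j : Fin (ℓ+1)) :
    (j, false) ∈ P.minSupp ↔ ∃ d, P.bot = some ((j : ℕ), d) ∧ (j : ℕ) < a := by
  have hab := P.htop (a, b) (by rw [h]; rfl)
  constructor
  · rintro ⟨hs, hmin⟩
    rcases hs with ⟨hcontra, _⟩ | ⟨_, q, hq, hq1, hq2⟩
    · simp at hcontra
    · obtain ⟨c, d⟩ := q
      have hcd := P.hbot (c, d) hq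
      simp at hq1 hq2
      -- minimality against (c, false)
      have h1 := hmin ((⟨c, by omega⟩ : Fin (ℓ+1)), false)
        (Or.inr ⟨rfl, (c, d), hq, by simp [hcd.1]⟩)
        ⟨Fin.le_def.mpr (by simpa using hq1), Or.inr rfl⟩
      have hc : (j : ℕ) = c := by
        have := congrArg (fun v : LadV ℓ => ((v.1 : ℕ))) h1
        simpa using this.symm
      -- j < a : otherwise (a, true) would be below
      have hja : (j : ℕ) < a := by
        by_contra hcon
        push_neg at hcon
        have h2 := hmin ((⟨a, by omega⟩ : Fin (ℓ+1)), true)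
          (Or.inl ⟨rfl, (a, b), by rw [h]; rfl, le_refl a, hab.1⟩)
          ⟨Fin.le_def.mpr (by simpa using hcon), Or.inl rfl⟩
        exact absurd (congrArg Prod.snd h2) (by simp)
      exact ⟨d, by rw [hq, hc], hja⟩
  · rintro ⟨d, hq, hja⟩
    have hcd := P.hbot ((j : ℕ), d) (by rw [hq]; rfl)
    constructor
    · exact Or.inr ⟨rfl, ((j : ℕ), d), by rw [hq]; rfl, le_refl _, hcd.1⟩
    · rintro ⟨i, s⟩ hw ⟨hle, hor⟩
      cases s with
      | true =>
        rcases hw with ⟨_, p, hp, hpi⟩ | ⟨hcontra, _⟩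
        · rw [h] at hp
          have hpab : p = (a, b) := ((by simpa using hp : (a, b) = p)).symm
          subst hpab
          have hia : (i : ℕ) ≤ (j : ℕ) := hle
          have hpi' : a ≤ (i : ℕ) := hpi.1
          omega
        · simp at hcontra
      | false =>
        rcases hw with ⟨hcontra, _⟩ | ⟨_, q, hq', hq1, hq2⟩
        · simp at hcontra
        · rw [hq] at hq'
          have hqd : q = ((j : ℕ), d) := ((by simpa using hq' : ((j : ℕ), d) = q)).symm
          subst hqd
          have hia : (i : ℕ) ≤ (j : ℕ) := hle
          have hq1' : (j : ℕ) ≤ (i : ℕ) := hq1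
          exact congrArg (fun n => ((n, false) : LadV ℓ)) (Fin.ext (le_antisymm hia hq1'))

/-- The bottom-left vertex is minimal when there is no top interval. -/
lemma bot_mem_minSupp {P : NFParam ℓ} {c d : ℕ} (ht : P.top = none) (hb : P.bot = some (c, d)) :
    ((⟨c, by have := P.hbot (c,d) (by rw [hb]; rfl); omega⟩ : Fin (ℓ+1)), false) ∈ P.minSupp := by
  have hcd := P.hbot (c, d) (by rw [hb]; rfl)
  constructor
  · exact Or.inr ⟨rfl, (c, d), by rw [hb]; rfl, le_refl c, hcd.1⟩
  · rintro ⟨i, s⟩ hw ⟨hle, hor⟩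
    cases s with
    | true =>
      rcases hw with ⟨_, p, hp, _⟩ | ⟨hcontra, _⟩
      · rw [ht] at hp
        simp at hp
      · simp at hcontra
    | false =>
      rcases hw with ⟨hcontra, _⟩ | ⟨_, q, hq, hq1, hq2⟩
      · simp at hcontra
      · rw [hb] at hq
        have : q = (c, d) := ((by simpa using hq : (c, d) = q)).symm
        subst this
        have hia : (i : ℕ) ≤ c := hle
        have hq1' : c ≤ (i : ℕ) := hq1
        exact congrArg (fun n => ((n, false) : LadV ℓ)) (Fin.ext (le_antisymm hia hq1'))

/-- When both are present, `c ≤ a`. -/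
lemma c_le_a {P : NFParam ℓ} {a b c d : ℕ} (ht : P.top = some (a, b)) (hb : P.bot = some (c, d)) :
    c ≤ a ∧ a ≤ d ∧ d ≤ b :=
  P.hboth (a, b) (by rw [ht]; rfl) (c, d) (by rw [hb]; rfl)

lemma dimvec_eq_of_fields {P Q : NFParam ℓ} (ht : P.top = Q.top) (hb : P.bot = Q.bot) :
    P.dimvec = Q.dimvec := by
  funext v
  unfold NFParam.dimvec NFParam.supp
  rw [ht, hb]

lemma dimvec_ne_zero (P : NFParam ℓ) : P.dimvec ≠ 0 := by
  rcases P.hne with h | h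
  · obtain ⟨⟨a, b⟩, ht⟩ := Option.ne_none_iff_exists'.mp h
    have hab := P.htop (a, b) (by rw [ht]; rfl)
    intro hcon
    have := congrFun hcon (((⟨a, by omega⟩ : Fin (ℓ+1)), true) : LadV ℓ)
    have hsupp : P.supp ((⟨a, by omega⟩ : Fin (ℓ+1)), true) :=
      Or.inl ⟨rfl, (a, b), by rw [ht]; rfl, le_refl a, by simpa using hab.1⟩
    simp only [NFParam.dimvec] at this
    rw [if_pos hsupp] at this
    exact one_ne_zero this
  · obtain ⟨⟨c, d⟩, hbt⟩ := Option.ne_none_iff_exists'.mp h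
    have hcd := P.hbot (c, d) (by rw [hbt]; rfl)
    intro hcon
    have := congrFun hcon (((⟨c, by omega⟩ : Fin (ℓ+1)), false) : LadV ℓ)
    have hsupp : P.supp ((⟨c, by omega⟩ : Fin (ℓ+1)), false) :=
      Or.inr ⟨rfl, (c, d), by rw [hbt]; rfl, le_refl c, by simpa using hcd.1⟩
    simp only [NFParam.dimvec] at this
    rw [if_pos hsupp] at this
    exact one_ne_zero this

lemma dimvec_top_one {P : NFParam ℓ} {a b : ℕ} (h : P.top = some (a, b)) :
    P.dimvec ((⟨b, by have := P.htop (a,b) (by rw [h]; rfl); omega⟩ : Fin (ℓ+1)), true) = 1 := by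
  have hab := P.htop (a, b) (by rw [h]; rfl)
  have hsupp : P.supp ((⟨b, by omega⟩ : Fin (ℓ+1)), true) :=
    Or.inl ⟨rfl, (a, b), by rw [h]; rfl, by simpa using hab.1, by simp⟩
  simp only [NFParam.dimvec]
  rw [if_pos hsupp]

lemma dimvec_top_zero {P : NFParam ℓ} {j : Fin (ℓ+1)} (h : rank P ≤ (j : ℕ)) :
    P.dimvec (j, true) = 0 := by
  simp only [NFParam.dimvec]
  rw [if_neg]
  rintro (⟨_, p, hp, hp1, hp2⟩ | ⟨hcontra, _⟩)
  · have := rank_some hp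
    have hp2' : (j : ℕ) ≤ p.2 := hp2
    omega
  · simp at hcontra

/-- Key injectivity: parameters with the same total dimension, minimal support set and
rank have the same dimension vector. -/
lemma dimvec_determined {P Q : NFParam ℓ} (hdim : P.totalDim = Q.totalDim)
    (hmin : P.minSupp = Q.minSupp) (hrk : rank P = rank Q) : P.dimvec = Q.dimvec := by
  rcases hPt : P.top with _ | ⟨a, b⟩
  · -- P.top = none
    have hQt : Q.top = none := by
      rcases hQt' : Q.top with _ | p
      · rfl
      · exfalso
        have h1 := rank_some hQt'
        have h2 := rank_none hPt
        omega
    rcases hPb : P.bot with _ | ⟨c, d⟩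
    · exfalso; rcases P.hne with h | h
      · exact h hPt
      · exact h hPb
    rcases hQb : Q.bot with _ | ⟨c', d'⟩
    · exfalso; rcases Q.hne with h | h
      · exact h hQt
      · exact h hQb
    have hcd := P.hbot (c, d) (by rw [hPb]; rfl)
    have hcd' := Q.hbot (c', d') (by rw [hQb]; rfl)
    -- c = c'
    have hmemP := bot_mem_minSupp hPt hPb
    have hmemQ := bot_mem_minSupp hQt hQb
    have hc1 : c' ≤ c := by
      have : ((⟨c, by omega⟩ : Fin (ℓ+1)), false) ∈ Q.minSupp := hmin ▸ hmemP
      rcases this.1 with ⟨hcontra, _⟩ | ⟨_, q, hq, hq1, hq2⟩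
      · simp at hcontra
      · rw [hQb] at hq
        have : q = (c', d') := ((by simpa using hq : (c', d') = q)).symm
        subst this
        simpa using hq1
    have hc2 : c ≤ c' := by
      have : ((⟨c', by omega⟩ : Fin (ℓ+1)), false) ∈ P.minSupp := hmin.symm ▸ hmemQ
      rcases this.1 with ⟨hcontra, _⟩ | ⟨_, q, hq, hq1, hq2⟩
      · simp at hcontra
      · rw [hPb] at hq
        have : q = (c, d) := ((by simpa using hq : (c, d) = q)).symm
        subst this
        simpa using hq1
    have hcc : c = c' := le_antisymm hc2 hc1
    subst hcc
    -- d = d'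
    have e1 := totalDim_split P
    have e2 := totalDim_split Q
    rw [card_top_none hPt, card_bot_some hPb] at e1
    rw [card_top_none hQt, card_bot_some hQb] at e2
    have hdd : d = d' := by omega
    subst hdd
    exact dimvec_eq_of_fields (hPt.trans hQt.symm) (hPb.trans hQb.symm)
  · -- P.top = some (a, b)
    rcases hQt : Q.top with _ | ⟨a', b'⟩
    · exfalso
      have h1 := rank_some hPt
      have h2 := rank_none hQt
      omega
    have hab := P.htop (a, b) (by rw [hPt]; rfl)
    have hab' := Q.htop (a', b') (by rw [hQt]; rfl)
    have hbb : b = b' := by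
      have h1 := rank_some hPt
      have h2 := rank_some hQt
      simp at h1 h2
      omega
    subst hbb
    -- a = a'
    have ha1 : a' ≤ a := by
      have : ((⟨a, by omega⟩ : Fin (ℓ+1)), true) ∈ Q.minSupp := hmin ▸ top_mem_minSupp hPt
      rcases this.1 with ⟨_, p, hp, hp1, hp2⟩ | ⟨hcontra, _⟩
      · rw [hQt] at hp
        have : p = (a', b) := ((by simpa using hp : (a', b) = p)).symm
        subst this
        simpa using hp1
      · simp at hcontra
    have ha2 : a ≤ a' := by
      have : ((⟨a', by omega⟩ : Fin (ℓ+1)), true) ∈ P.minSupp := hmin.symm ▸ top_mem_minSupp hQt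
      rcases this.1 with ⟨_, p, hp, hp1, hp2⟩ | ⟨hcontra, _⟩
      · rw [hPt] at hp
        have : p = (a, b) := ((by simpa using hp : (a, b) = p)).symm
        subst this
        simpa using hp1
      · simp at hcontra
    have haa : a = a' := le_antisymm ha2 ha1
    subst haa
    -- bottoms
    have e1 := totalDim_split P
    have e2 := totalDim_split Q
    rw [card_top_some hPt] at e1
    rw [card_top_some hQt] at e2
    by_cases hbb : ∃ j : Fin (ℓ+1), (j, false) ∈ P.minSupp
    · obtain ⟨j, hj⟩ := hbb
      obtain ⟨d, hPb, hja⟩ := (bot_minSupp_iff hPt j).mp hj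
      obtain ⟨d', hQb, _⟩ := (bot_minSupp_iff hQt j).mp (hmin ▸ hj)
      have hcd := P.hbot ((j : ℕ), d) (by rw [hPb]; rfl)
      have hcd' := Q.hbot ((j : ℕ), d') (by rw [hQb]; rfl)
      rw [card_bot_some hPb] at e1
      rw [card_bot_some hQb] at e2
      simp at hcd hcd'
      have hdd : d = d' := by omega
      subst hdd
      exact dimvec_eq_of_fields (hPt.trans hQt.symm) (hPb.trans hQb.symm)
    · push_neg at hbb
      have hbbQ : ∀ j : Fin (ℓ+1), (j, false) ∉ Q.minSupp := fun j => hmin ▸ hbb j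
      -- P.bot is none or some (a, d)
      have keyP : P.bot = none ∨ ∃ d, P.bot = some (a, d) ∧ a ≤ d := by
        rcases hPb : P.bot with _ | ⟨c, d⟩
        · exact Or.inl rfl
        · have hcd := P.hbot (c, d) (by rw [hPb]; rfl)
          have hca := P.hboth (a, b) (by rw [hPt]; rfl) (c, d) (by rw [hPb]; rfl)
          have hc : c = a := by
            by_contra hcon
            have hlt : c < a := by simp at hca; omega
            exact hbb ⟨c, by omega⟩ ((bot_minSupp_iff hPt ⟨c, by omega⟩).mpr
              ⟨d, by simpa using hPb, by simpa using hlt⟩)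
          subst hc
          exact Or.inr ⟨d, rfl, hcd.1⟩
      have keyQ : Q.bot = none ∨ ∃ d, Q.bot = some (a, d) ∧ a ≤ d := by
        rcases hQb : Q.bot with _ | ⟨c, d⟩
        · exact Or.inl rfl
        · have hcd := Q.hbot (c, d) (by rw [hQb]; rfl)
          have hca := Q.hboth (a, b) (by rw [hQt]; rfl) (c, d) (by rw [hQb]; rfl)
          have hc : c = a := by
            by_contra hcon
            have hlt : c < a := by simp at hca; omega
            exact hbbQ ⟨c, by omega⟩ ((bot_minSupp_iff hQt ⟨c, by omega⟩).mpr
              ⟨d, by simpa using hQb, by simpa using hlt⟩)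
          subst hc
          exact Or.inr ⟨d, rfl, hcd.1⟩
      simp at hab
      rcases keyP with hPb | ⟨d, hPb, had⟩ <;> rcases keyQ with hQb | ⟨d', hQb, had'⟩
      · exact dimvec_eq_of_fields (hPt.trans hQt.symm) (hPb.trans hQb.symm)
      · exfalso
        rw [card_bot_none hPb] at e1
        rw [card_bot_some hQb] at e2
        omega
      · exfalso
        rw [card_bot_some hPb] at e1
        rw [card_bot_none hQb] at e2
        omega
      · rw [card_bot_some hPb] at e1
        rw [card_bot_some hQb] at e2
        have hdd : d = d' := by omega
        subst hdd
        exact dimvec_eq_of_fields (hPt.trans hQt.symm) (hPb.trans hQb.symm)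

end NestfreeAux

/-- **Linear independence of dimension vectors within `𝓘ᵏ_S`.** For a fixed integer
`k > 0` and a fixed set `S` of vertices of the ladder quiver of length `ℓ`, the
dimension vectors of the nestfree indecomposables of total dimension `k` whose set of
minimal support elements is `S` form a linearly independent subset of the space of
functions `Q₀ → ℝ`. -/
theorem nestfree_dimvecs_linearIndependent (ℓ k : ℕ) (hk : 0 < k) (S : Set (LadV ℓ)) :
    LinearIndependent ℝ
      ((↑) : {f : LadV ℓ → ℝ |
          ∃ P : NFParam ℓ, P.totalDim = k ∧ P.minSupp = S ∧ f = P.dimvec} →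
        (LadV ℓ → ℝ)) := by
  classical
  rw [linearIndependent_iff']
  have hmem : ∀ x : {f : LadV ℓ → ℝ |
      ∃ P : NFParam ℓ, P.totalDim = k ∧ P.minSupp = S ∧ f = P.dimvec},
      ∃ P : NFParam ℓ, P.totalDim = k ∧ P.minSupp = S ∧ (x : LadV ℓ → ℝ) = P.dimvec :=
    fun x => x.2
  choose Pm hdim' hmin' hval using hmem
  have hinj : ∀ x y, NestfreeAux.rank (Pm x) = NestfreeAux.rank (Pm y) → x = y := by
    intro x y h
    apply Subtype.ext
    rw [hval x, hval y]
    exact NestfreeAux.dimvec_determined ((hdim' x).trans (hdim' y).symm)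
      ((hmin' x).trans (hmin' y).symm) h
  intro s
  induction s using Finset.strongInduction with
  | _ s ih =>
    intro g hsum i hi
    have hsne : s.Nonempty := ⟨i, hi⟩
    obtain ⟨f₀, hf₀s, hmax⟩ := Finset.exists_max_image s (fun x => NestfreeAux.rank (Pm x)) hsne
    have hg0 : g f₀ = 0 := by
      rcases hr : NestfreeAux.rank (Pm f₀) with _ | n
      · -- all ranks zero, so s = {f₀}
        have huniq : ∀ x ∈ s, x = f₀ := fun x hx =>
          hinj x f₀ (by have := hmax x hx; omega)
        have hs : s = {f₀} := Finset.eq_singleton_iff_unique_mem.mpr ⟨hf₀s, huniq⟩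
        rw [hs, Finset.sum_singleton] at hsum
        rcases smul_eq_zero.mp hsum with h | h
        · exact h
        · exact absurd ((hval f₀).symm.trans h) (NestfreeAux.dimvec_ne_zero (Pm f₀))
      · -- top interval exists
        obtain ⟨⟨a, b⟩, ht⟩ : ∃ p, (Pm f₀).top = some p := by
          rcases h' : (Pm f₀).top with _ | p
          · rw [NestfreeAux.rank_none h'] at hr; cases hr
          · exact ⟨p, rfl⟩
        have hb : b ≤ ℓ := ((Pm f₀).htop (a, b) (by rw [ht]; rfl)).2
        have hone : (f₀ : LadV ℓ → ℝ) ((⟨b, by omega⟩ : Fin (ℓ+1)), true) = 1 := by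
          rw [hval f₀]; exact NestfreeAux.dimvec_top_one ht
        have hzero : ∀ x ∈ s, x ≠ f₀ →
            (x : LadV ℓ → ℝ) ((⟨b, by omega⟩ : Fin (ℓ+1)), true) = 0 := by
          intro x hx hxne
          rw [hval x]
          apply NestfreeAux.dimvec_top_zero
          have h1 : NestfreeAux.rank (Pm x) ≤ NestfreeAux.rank (Pm f₀) := hmax x hx
          have h2 : NestfreeAux.rank (Pm x) ≠ NestfreeAux.rank (Pm f₀) := fun hEq =>
            hxne (hinj x f₀ hEq)
          have h3 := NestfreeAux.rank_some ht
          show NestfreeAux.rank (Pm x) ≤ b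
          omega
        have heval : ∑ x ∈ s, g x * (x : LadV ℓ → ℝ) ((⟨b, by omega⟩ : Fin (ℓ+1)), true) = 0 := by
          have := congrFun hsum (((⟨b, by omega⟩ : Fin (ℓ+1)), true) : LadV ℓ)
          exact (Finset.sum_apply _ s (fun x => g x • (x : LadV ℓ → ℝ))).symm.trans this
        rw [Finset.sum_eq_single f₀ (fun x hx hxne => by rw [hzero x hx hxne, mul_zero])
          (fun h => absurd hf₀s h), hone, mul_one] at heval
        exact heval
    rcases eq_or_ne i f₀ with rfl | hine
    · exact hg0
    · refine ih (s.erase f₀) (Finset.erase_ssubset hf₀s) g ?_ i (Finset.mem_erase.mpr ⟨hine, hi⟩)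
      rw [Finset.sum_erase_eq_sub hf₀s, hsum, hg0, zero_smul, sub_zero]
end
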